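/- arXiv:1607.02330 — 4 statements merged into one kernel-verified Lean document; each statement's English description precedes it below -/
import Mathlib

section
/- Let P and Q be probability mass functions on a finite set X and let α > 0. Define P̃(x) = P(x)^α / Σ_{x'} P(x')^α and Q̃(x) = Q(x)^α / Σ_{x'} Q(x')^α. Then the relative α-entropy satisfies Δ_α(P||Q) = D_{1/α}(P̃||Q̃), with the left-hand side infinite if and only if the right-hand side is infinite. -/
open scoped ENNReal BigOperators
open Finset

/-- Kullback-Leibler divergence between two PMFs on a finite set, valued in `EReal`
(`⊤` when `P` is not absolutely continuous w.r.t. `Q`). -/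
noncomputable def klDiv {X : Type*} [Fintype X] (P Q : X → ℝ≥0∞) : EReal :=
  if ∀ x, Q x = 0 → P x = 0 then
    (((∑ x, (P x).toReal * Real.log ((P x).toReal / (Q x).toReal)) : ℝ) : EReal)
  else ⊤

/-- Rényi divergence of order `α` (KL divergence at `α = 1`).  The ENNReal conventions
`0 * ⊤ = 0` and `0 ^ y = ⊤` for `y < 0` encode `0/0 = 0` and `p/0 = ∞`. -/
noncomputable def renyiDiv {X : Type*} [Fintype X] (α : ℝ) (P Q : X → ℝ≥0∞) : EReal :=
  if α = 1 then klDiv P Q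
  else (((α - 1)⁻¹ : ℝ) : EReal) * ENNReal.log (∑ x, P x ^ α * Q x ^ (1 - α))

/-- Relative α-entropy (Sundaresan's divergence); KL divergence at `α = 1`. -/
noncomputable def relAlphaEnt {X : Type*} [Fintype X] (α : ℝ) (P Q : X → ℝ≥0∞) : EReal :=
  if α = 1 then klDiv P Q
  else ((α / (1 - α) : ℝ) : EReal) * ENNReal.log (∑ x, P x * Q x ^ (α - 1))
    + ENNReal.log (∑ x, Q x ^ α)
    - (((1 - α)⁻¹ : ℝ) : EReal) * ENNReal.log (∑ x, P x ^ α)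

/-- The set of PMFs on a finite type, as a subtype. -/
def PMFon (X : Type*) [Fintype X] : Type _ := {p : X → ℝ≥0∞ // ∑ x, p x = 1}

noncomputable def margX {X Y : Type*} [Fintype X] [Fintype Y] (P : X × Y → ℝ≥0∞) : X → ℝ≥0∞ :=
  fun x => ∑ y, P (x, y)

noncomputable def margY {X Y : Type*} [Fintype X] [Fintype Y] (P : X × Y → ℝ≥0∞) : Y → ℝ≥0∞ :=
  fun y => ∑ x, P (x, y)

/-- Mutual information of a joint PMF. -/
noncomputable def mutualInfo {X Y : Type*} [Fintype X] [Fintype Y] (P : X × Y → ℝ≥0∞) : EReal :=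
  klDiv P (fun p => margX P p.1 * margY P p.2)

/-- The dependence measure `J_α`. -/
noncomputable def Jalpha {X Y : Type*} [Fintype X] [Fintype Y] (α : ℝ) (P : X × Y → ℝ≥0∞) :
    EReal :=
  ⨅ (Q : PMFon X × PMFon Y), renyiDiv α P (fun p => Q.1.1 p.1 * Q.2.1 p.2)

/-- The dependence measure `K_α`. -/
noncomputable def Kalpha {X Y : Type*} [Fintype X] [Fintype Y] (α : ℝ) (P : X × Y → ℝ≥0∞) :
    EReal :=
  ⨅ (Q : PMFon X × PMFon Y), relAlphaEnt α P (fun p => Q.1.1 p.1 * Q.2.1 p.2)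

/-- Rényi entropy of order `β`. -/
noncomputable def renyiEnt {X : Type*} [Fintype X] (β : ℝ) (P : X → ℝ≥0∞) : EReal :=
  if β = 1 then (((∑ x, (P x).toReal * Real.log (P x).toReal⁻¹ : ℝ)) : EReal)
  else (((1 - β)⁻¹ : ℝ) : EReal) * ENNReal.log (∑ x, P x ^ β)

/-- Min-entropy. -/
noncomputable def minEnt {X : Type*} [Fintype X] (P : X → ℝ≥0∞) : EReal :=
  - ENNReal.log (⨆ x, P x)


/-!
Both divergences are invariant under rescaling `P` and `Q`. With `A = ∑ P^α` and `B = ∑ Q^α`,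
the sum defining `D_{1/α}(P̃‖Q̃)` factors as `(∑ P Q^{α-1}) · A^{-1/α} · B^{-(1-1/α)}`; taking
logarithms and multiplying by `(1/α - 1)⁻¹ = α/(1-α)` reproduces `Δ_α(P‖Q)` term by term, so the
two sides are literally the same `EReal` expression in `log ∑ P Q^{α-1}`, infinite values included.
-/
theorem EReal.coe_mul_add_coe (c : ℝ) (L : EReal) (r : ℝ) :
    (c : EReal) * (L + r) = c * L + (c * r : ℝ) := by
  induction L using EReal.rec with
  | coe x => norm_cast; ring
  | bot =>
    rcases lt_trichotomy c 0 with h | rfl | h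
    · rw [EReal.bot_add, EReal.coe_mul_bot_of_neg h, EReal.top_add_coe]
    · simp
    · rw [EReal.bot_add, EReal.coe_mul_bot_of_pos h, EReal.bot_add]
  | top =>
    rcases lt_trichotomy c 0 with h | rfl | h
    · rw [EReal.top_add_coe, EReal.coe_mul_top_of_neg h, EReal.bot_add]
    · simp
    · rw [EReal.top_add_coe, EReal.coe_mul_top_of_pos h, EReal.top_add_coe]

namespace ENNReal

variable {X : Type*} [Fintype X]

theorem sum_rpow_ne_zero {P : X → ℝ≥0∞} (hP : ∑ x, P x ≠ 0) {α : ℝ} (hα : 0 < α) :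
    ∑ x, P x ^ α ≠ 0 := by
  simpa [Finset.sum_eq_zero_iff, rpow_eq_zero_iff_of_pos hα] using hP

theorem sum_rpow_ne_top {P : X → ℝ≥0∞} (hP : ∑ x, P x ≠ ∞) {α : ℝ} (hα : 0 ≤ α) :
    ∑ x, P x ^ α ≠ ∞ :=
  sum_ne_top.2 fun x hx => rpow_ne_top_of_nonneg hα (sum_ne_top.1 hP x hx)

end ENNReal

section Escort

open ENNReal

variable {X : Type*} [Fintype X]

noncomputable def escort (α : ℝ) (P : X → ℝ≥0∞) (x : X) : ℝ≥0∞ :=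
  P x ^ α / ∑ x', P x' ^ α

theorem escort_one {P : X → ℝ≥0∞} (hP : ∑ x, P x = 1) : escort 1 P = P := by
  funext x
  simp [escort, hP]

theorem sum_escort_rpow_inv_mul_escort_rpow {P Q : X → ℝ≥0∞} (hQ : ∑ x, Q x ≠ ∞)
    {α : ℝ} (hα : 0 < α) (hQα : ∑ x, Q x ^ α ≠ 0) :
    ∑ x, escort α P x ^ α⁻¹ * escort α Q x ^ (1 - α⁻¹) =
      (∑ x, P x * Q x ^ (α - 1)) *
        ((∑ x, P x ^ α) ^ α⁻¹)⁻¹ * ((∑ x, Q x ^ α) ^ (1 - α⁻¹))⁻¹ := by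
  rw [Finset.sum_mul, Finset.sum_mul]
  refine Finset.sum_congr rfl fun x hx => ?_
  have hQx : Q x ^ α ≠ ∞ := rpow_ne_top_of_nonneg hα.le (ENNReal.sum_ne_top.1 hQ x hx)
  have hexp : α * (1 - α⁻¹) = α - 1 := by field_simp
  rw [escort, escort, div_rpow_of_nonneg _ _ (inv_nonneg.2 hα.le), ← rpow_mul,
    mul_inv_cancel₀ hα.ne', rpow_one, div_eq_mul_inv (Q x ^ α),
    mul_rpow_of_ne_top hQx (inv_ne_top.2 hQα), ← rpow_mul, hexp, inv_rpow, div_eq_mul_inv]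
  ring

theorem relAlphaEnt_eq_renyiDiv_escort_of_ne_one {P Q : X → ℝ≥0∞}
    (hP₀ : ∑ x, P x ≠ 0) (hP : ∑ x, P x ≠ ∞) (hQ₀ : ∑ x, Q x ≠ 0) (hQ : ∑ x, Q x ≠ ∞)
    {α : ℝ} (hα : 0 < α) (hα₁ : α ≠ 1) :
    relAlphaEnt α P Q = renyiDiv α⁻¹ (escort α P) (escort α Q) := by
  set A := ∑ x, P x ^ α
  set B := ∑ x, Q x ^ α
  have hA₀ : A ≠ 0 := sum_rpow_ne_zero hP₀ hα
  have hB₀ : B ≠ 0 := sum_rpow_ne_zero hQ₀ hα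
  have hA : ENNReal.log A = (Real.log A.toReal : EReal) :=
    log_pos_real' (toReal_pos hA₀ (sum_rpow_ne_top hP hα.le))
  have hB : ENNReal.log B = (Real.log B.toReal : EReal) :=
    log_pos_real' (toReal_pos hB₀ (sum_rpow_ne_top hQ hα.le))
  have hinv₁ : α⁻¹ ≠ 1 := by simpa using hα₁
  rw [relAlphaEnt, renyiDiv, if_neg hα₁, if_neg hinv₁,
    sum_escort_rpow_inv_mul_escort_rpow hQ hα hB₀, log_mul_add, log_mul_add, log_inv, log_inv, log_rpow, log_rpow, hA, hB]
  generalize ENNReal.log (∑ x, P x * Q x ^ (α - 1)) = L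
  set a := Real.log A.toReal
  set b := Real.log B.toReal
  have h1α : 1 - α ≠ 0 := sub_ne_zero.2 hα₁.symm
  calc ((α / (1 - α) : ℝ) : EReal) * L + b - ((1 - α)⁻¹ : ℝ) * a
      = ((α / (1 - α) : ℝ) : EReal) * L + ((b - (1 - α)⁻¹ * a : ℝ) : EReal) := by
        rw [sub_eq_add_neg, add_assoc]; norm_cast
    _ = ((α⁻¹ - 1)⁻¹ : ℝ) * (L + ((-(α⁻¹ * a) + -((1 - α⁻¹) * b) : ℝ) : EReal)) := by
        rw [EReal.coe_mul_add_coe]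
        congr 2
        · field_simp
        · field_simp; ring
    _ = _ := by rw [add_assoc]; norm_cast

end Escort

/-- `Δ_α(P‖Q) = D_{1/α}(P̃‖Q̃)` for the rescaled PMFs, and the LHS is
infinite iff the RHS is. -/
theorem stmt0 {X : Type*} [Fintype X] (P Q : X → ℝ≥0∞)
    (hP : ∑ x, P x = 1) (hQ : ∑ x, Q x = 1) (α : ℝ) (hα : 0 < α) :
    relAlphaEnt α P Q =
      renyiDiv α⁻¹ (fun x => P x ^ α / ∑ x', P x' ^ α)
        (fun x => Q x ^ α / ∑ x', Q x' ^ α) ∧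
    (relAlphaEnt α P Q = ⊤ ↔
      renyiDiv α⁻¹ (fun x => P x ^ α / ∑ x', P x' ^ α)
        (fun x => Q x ^ α / ∑ x', Q x' ^ α) = ⊤) := by
  have key : relAlphaEnt α P Q = renyiDiv α⁻¹ (escort α P) (escort α Q) := by
    rcases eq_or_ne α 1 with rfl | hα₁
    · rw [relAlphaEnt, renyiDiv, if_pos rfl, inv_one, if_pos rfl, escort_one hP, escort_one hQ]
    · exact relAlphaEnt_eq_renyiDiv_escort_of_ne_one (by simp [hP]) (by simp [hP])
        (by simp [hQ]) (by simp [hQ]) hα hα₁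
  exact ⟨key, by rw [key]; rfl⟩
end

section
/- J_α satisfies the data-processing inequality: if X, Y, Z are finite random variables forming a Markov chain X — Y — Z (i.e., P_{Z|XY}(z|x,y) = P_{Z|Y}(z|y)), then J_α(X;Z) ≤ J_α(X;Y) for every α > 0. -/
open scoped ENNReal BigOperators
open Finset

/-!
Since `J_α(X;Z)` is an infimum over products `Q_X Q_Z`, it suffices to bound every
`D_α(P_XY ‖ Q_X Q_Y)` from below by one term of that infimum. The channel
`(x, y) ↦ (x, W(·|y))` maps `P_XY` to `P_XZ` and `Q_X Q_Y` to the product `Q_X (Q_Y W)`, so the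
data-processing inequality for `D_α` gives the bound. That inequality is proved output by
output: for `α ≠ 1` by Hölder's inequality for `∑ P^α Q^(1-α)`, in opposite directions on either
side of `α = 1` to match the sign of `(α - 1)⁻¹`, and for `α = 1` by the log-sum inequality.
-/

open Real in
lemma mul_log_add_sub_le_mul_log_div {a b r : ℝ} (ha : 0 ≤ a) (hb : 0 ≤ b) (hab : b = 0 → a = 0)
    (hr : 0 < r) : a * log r + a - b * r ≤ a * log (a / b) := by
  rcases ha.eq_or_lt with rfl | ha
  · simpa using mul_nonneg hb hr.le
  have hb : 0 < b := hb.lt_of_ne fun h => ha.ne' (hab h.symm)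
  have key := one_sub_inv_le_log_of_pos (div_pos ha (mul_pos hb hr))
  rw [inv_div, log_div ha.ne' (mul_pos hb hr).ne', log_mul hb.ne' hr.ne'] at key
  rw [log_div ha.ne' hb.ne']
  have hlin : a * (1 - b * r / a) = a - b * r := by field_simp
  nlinarith [mul_le_mul_of_nonneg_left key ha.le]

open Real in
lemma sum_mul_log_div_le {ι : Type*} [Fintype ι] (a b : ι → ℝ) (ha : ∀ i, 0 ≤ a i)
    (hb : ∀ i, 0 ≤ b i) (hab : ∀ i, b i = 0 → a i = 0) :
    (∑ i, a i) * log ((∑ i, a i) / ∑ i, b i) ≤ ∑ i, a i * log (a i / b i) := by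
  set A := ∑ i, a i
  set B := ∑ i, b i
  rcases (Finset.sum_nonneg fun i _ => ha i).eq_or_lt with hA | hA
  · have ha0 : ∀ i, a i = 0 := fun i =>
      (Finset.sum_eq_zero_iff_of_nonneg fun i _ => ha i).1 hA.symm i (Finset.mem_univ i)
    simp [A, ha0]
  have hB : 0 < B := by
    refine (Finset.sum_nonneg fun i _ => hb i).lt_of_ne fun hB => hA.ne' ?_
    have hb0 := (Finset.sum_eq_zero_iff_of_nonneg fun i _ => hb i).1 hB.symm
    exact Finset.sum_eq_zero fun i hi => hab i (hb0 i hi)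
  -- with `r = A / B` the linear terms of the termwise bound cancel
  calc A * log (A / B) = ∑ i, (a i * log (A / B) + a i - b i * (A / B)) := by
        rw [Finset.sum_sub_distrib, Finset.sum_add_distrib, ← Finset.sum_mul, ← Finset.sum_mul]
        field_simp
        ring
    _ ≤ ∑ i, a i * log (a i / b i) := Finset.sum_le_sum fun i _ =>
        mul_log_add_sub_le_mul_log_div (ha i) (hb i) (hab i) (div_pos hA hB)

open Real in
lemma sum_channel_mul_log_div_le {I O : Type*} [Fintype I] [Fintype O] (p q : I → ℝ)
    (hp : ∀ i, 0 ≤ p i) (hq : ∀ i, 0 ≤ q i) (hpq : ∀ i, q i = 0 → p i = 0) (a : I → O → ℝ)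
    (ha : ∀ i o, 0 ≤ a i o) (ha1 : ∀ i, ∑ o, a i o = 1) :
    ∑ o, (∑ i, p i * a i o) * log ((∑ i, p i * a i o) / ∑ i, q i * a i o)
      ≤ ∑ i, p i * log (p i / q i) := by
  calc _ ≤ ∑ o, ∑ i, p i * a i o * log (p i * a i o / (q i * a i o)) :=
        Finset.sum_le_sum fun o _ => sum_mul_log_div_le _ _
          (fun i => mul_nonneg (hp i) (ha i o)) (fun i => mul_nonneg (hq i) (ha i o))
          fun i h => by rcases mul_eq_zero.1 h with h | h <;> simp [h, hpq]
    _ = ∑ i, ∑ o, p i * log (p i / q i) * a i o := by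
        rw [Finset.sum_comm]
        refine Fintype.sum_congr _ _ fun i => Fintype.sum_congr _ _ fun o => ?_
        rcases eq_or_ne (a i o) 0 with h | h
        · simp [h]
        · rw [mul_div_mul_right _ _ h]; ring
    _ = ∑ i, p i * log (p i / q i) := by simp [← Finset.mul_sum, ha1]

lemma ne_top_of_sum_eq_one {ι : Type*} [Fintype ι] {f : ι → ℝ≥0∞} (h : ∑ i, f i = 1) (i : ι) :
    f i ≠ ⊤ :=
  (ENNReal.lt_top_of_sum_ne_top (h ▸ ENNReal.one_ne_top) (Finset.mem_univ i)).ne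

lemma toReal_sum_mul {ι : Type*} [Fintype ι] {f g : ι → ℝ≥0∞} (hf : ∀ i, f i ≠ ⊤)
    (hg : ∀ i, g i ≠ ⊤) : (∑ i, f i * g i).toReal = ∑ i, (f i).toReal * (g i).toReal := by
  rw [ENNReal.toReal_sum fun i _ => ENNReal.mul_ne_top (hf i) (hg i)]
  simp only [ENNReal.toReal_mul]

lemma klDiv_channel_le {I O : Type*} [Fintype I] [Fintype O] (P Q : I → ℝ≥0∞)
    (hP : ∀ i, P i ≠ ⊤) (hQ : ∀ i, Q i ≠ ⊤) (A : I → O → ℝ≥0∞) (hA : ∀ i, ∑ o, A i o = 1) :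
    klDiv (fun o => ∑ i, P i * A i o) (fun o => ∑ i, Q i * A i o) ≤ klDiv P Q := by
  have hA_top : ∀ i o, A i o ≠ ⊤ := fun i => ne_top_of_sum_eq_one (hA i)
  unfold klDiv
  by_cases hPQ : ∀ i, Q i = 0 → P i = 0
  swap
  · rw [if_neg hPQ]
    exact le_top
  have hPQA : ∀ o, ∑ i, Q i * A i o = 0 → ∑ i, P i * A i o = 0 := by
    intro o h
    simp only [Finset.sum_eq_zero_iff, Finset.mem_univ, true_implies, mul_eq_zero] at h ⊢
    exact fun i => (h i).imp_left (hPQ i)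
  rw [if_pos hPQA, if_pos hPQ, EReal.coe_le_coe_iff]
  simp only [toReal_sum_mul hP (hA_top · _), toReal_sum_mul hQ (hA_top · _)]
  refine sum_channel_mul_log_div_le _ _ (fun _ => ENNReal.toReal_nonneg)
    (fun _ => ENNReal.toReal_nonneg) (fun i h => ?_) _ (fun _ _ => ENNReal.toReal_nonneg)
    fun i => ?_
  · rw [ENNReal.toReal_eq_zero_iff] at h
    simp [hPQ i (h.resolve_right (hQ i))]
  · rw [← ENNReal.toReal_sum fun o _ => hA_top i o, hA i, ENNReal.toReal_one]

noncomputable def hellingerSum {X : Type*} [Fintype X] (α : ℝ) (P Q : X → ℝ≥0∞) : ℝ≥0∞ :=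
  ∑ x, P x ^ α * Q x ^ (1 - α)

lemma renyiDiv_of_ne_one {X : Type*} [Fintype X] {α : ℝ} (hα : α ≠ 1) (P Q : X → ℝ≥0∞) :
    renyiDiv α P Q = ((α - 1)⁻¹ : ℝ) * ENNReal.log (hellingerSum α P Q) :=
  if_neg hα

section Holder

variable {ι : Type*} [Fintype ι] {α : ℝ}

lemma hellingerSum_le_of_lt_one (a b : ι → ℝ≥0∞) (hα₀ : 0 < α) (hα₁ : α < 1) :
    hellingerSum α a b ≤ (∑ i, a i) ^ α * (∑ i, b i) ^ (1 - α) := by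
  have hpq : (α⁻¹).HolderConjugate (1 - α)⁻¹ := by
    rw [Real.holderConjugate_iff, inv_inv, inv_inv]
    exact ⟨(one_lt_inv₀ hα₀).2 hα₁, by ring⟩
  have := ENNReal.inner_le_Lp_mul_Lq univ (fun i => a i ^ α) (fun i => b i ^ (1 - α)) hpq
  simp only [← ENNReal.rpow_mul, mul_inv_cancel₀ hα₀.ne', mul_inv_cancel₀ (sub_pos.2 hα₁).ne',
    ENNReal.rpow_one, one_div, inv_inv] at this
  exact this

lemma rpow_mul_rpow_le_hellingerSum_of_one_lt (a b : ι → ℝ≥0∞) (hb : ∀ i, b i ≠ ⊤)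
    (hα : 1 < α) : (∑ i, a i) ^ α * (∑ i, b i) ^ (1 - α) ≤ hellingerSum α a b := by
  have hα₀ : 0 < α := by linarith
  by_cases! hab : ∃ i, b i = 0 ∧ a i ≠ 0
  · obtain ⟨i, hbi, hai⟩ := hab
    have hterm : a i ^ α * b i ^ (1 - α) = ⊤ := by
      rw [hbi, ENNReal.zero_rpow_of_neg (by linarith), ENNReal.mul_top]
      simp [hai, hα₀.le]
    rw [hellingerSum, (ENNReal.sum_eq_top (f := fun i => a i ^ α * b i ^ (1 - α))).2
      ⟨i, Finset.mem_univ i, hterm⟩]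
    exact le_top
  have hmul : ∀ i, b i * (a i / b i) = a i := fun i =>
    ENNReal.mul_div_cancel' (hab i) fun h => absurd h (hb i)
  have hmul_rpow : ∀ i, b i * (a i / b i) ^ α = a i ^ α * b i ^ (1 - α) := by
    intro i
    rcases eq_or_ne (b i) 0 with h | h
    · simp [h, hab i h, hα₀]
    rw [ENNReal.div_rpow_of_nonneg _ _ hα₀.le, ENNReal.rpow_sub _ _ h (hb i), ENNReal.rpow_one,
      div_eq_mul_inv, div_eq_mul_inv, mul_left_comm]
  have holder := ENNReal.inner_le_weight_mul_Lp_of_nonneg univ hα.le b fun i => a i / b i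
  simp only [hmul, hmul_rpow] at holder
  have hB_top : ∑ i, b i ≠ ⊤ := ENNReal.sum_ne_top.2 fun i _ => hb i
  rcases eq_or_ne (∑ i, b i) 0 with hB | hB
  · have hA : ∑ i, a i = 0 :=
      Finset.sum_eq_zero fun i _ => hab i (Finset.sum_eq_zero_iff.1 hB i (Finset.mem_univ i))
    simp [hA, ENNReal.zero_rpow_of_pos hα₀]
  have hexp : (1 - α⁻¹) * α + (1 - α) = 0 := by field_simp; ring
  calc (∑ i, a i) ^ α * (∑ i, b i) ^ (1 - α)
      ≤ ((∑ i, b i) ^ (1 - α⁻¹) * hellingerSum α a b ^ α⁻¹) ^ α * (∑ i, b i) ^ (1 - α) := by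
        gcongr
        exact holder
    _ = hellingerSum α a b := by
        rw [ENNReal.mul_rpow_of_nonneg _ _ hα₀.le, ← ENNReal.rpow_mul, ← ENNReal.rpow_mul,
          inv_mul_cancel₀ hα₀.ne', ENNReal.rpow_one, mul_right_comm,
          ← ENNReal.rpow_add _ _ hB hB_top, hexp, ENNReal.rpow_zero, one_mul]

end Holder

section Channel

variable {I O : Type*} [Fintype I] [Fintype O]

lemma sum_sum_mul_channel (P : I → ℝ≥0∞) {A : I → O → ℝ≥0∞} (hA : ∀ i, ∑ o, A i o = 1) :
    ∑ o, ∑ i, P i * A i o = ∑ i, P i := by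
  rw [Finset.sum_comm]
  simp [← Finset.mul_sum, hA]

lemma mul_rpow_mul_mul_rpow_one_sub {x y c : ℝ≥0∞} (hx : x ≠ ⊤) (hy : y ≠ ⊤) (hc : c ≠ ⊤)
    {α : ℝ} (hα : 0 < α) : (x * c) ^ α * (y * c) ^ (1 - α) = x ^ α * y ^ (1 - α) * c := by
  rcases eq_or_ne c 0 with rfl | hc₀
  · simp [hα]
  rw [ENNReal.mul_rpow_of_ne_top hx hc, ENNReal.mul_rpow_of_ne_top hy hc, mul_mul_mul_comm,
    ← ENNReal.rpow_add _ _ hc₀ hc, add_sub_cancel, ENNReal.rpow_one]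

lemma sum_hellingerSum_channel {α : ℝ} (hα : 0 < α) {P Q : I → ℝ≥0∞} (hP : ∀ i, P i ≠ ⊤)
    (hQ : ∀ i, Q i ≠ ⊤) {A : I → O → ℝ≥0∞} (hA : ∀ i, ∑ o, A i o = 1) :
    ∑ o, hellingerSum α (fun i => P i * A i o) (fun i => Q i * A i o) = hellingerSum α P Q := by
  simp only [hellingerSum, mul_rpow_mul_mul_rpow_one_sub (hP _) (hQ _)
    (ne_top_of_sum_eq_one (hA _) _) hα]
  exact sum_sum_mul_channel _ hA

lemma hellingerSum_le_channel_of_lt_one {α : ℝ} (hα₀ : 0 < α) (hα₁ : α < 1) {P Q : I → ℝ≥0∞}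
    (hP : ∀ i, P i ≠ ⊤) (hQ : ∀ i, Q i ≠ ⊤) {A : I → O → ℝ≥0∞} (hA : ∀ i, ∑ o, A i o = 1) :
    hellingerSum α P Q
      ≤ hellingerSum α (fun o => ∑ i, P i * A i o) (fun o => ∑ i, Q i * A i o) := by
  rw [← sum_hellingerSum_channel hα₀ hP hQ hA]
  exact Finset.sum_le_sum fun o _ => hellingerSum_le_of_lt_one _ _ hα₀ hα₁

lemma hellingerSum_channel_le_of_one_lt {α : ℝ} (hα : 1 < α) {P Q : I → ℝ≥0∞}
    (hP : ∀ i, P i ≠ ⊤) (hQ : ∀ i, Q i ≠ ⊤) {A : I → O → ℝ≥0∞} (hA : ∀ i, ∑ o, A i o = 1) :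
    hellingerSum α (fun o => ∑ i, P i * A i o) (fun o => ∑ i, Q i * A i o)
      ≤ hellingerSum α P Q := by
  rw [← sum_hellingerSum_channel (by linarith) hP hQ hA]
  exact Finset.sum_le_sum fun o _ => rpow_mul_rpow_le_hellingerSum_of_one_lt _ _
    (fun i => ENNReal.mul_ne_top (hQ i) (ne_top_of_sum_eq_one (hA i) o)) hα

theorem renyiDiv_channel_le {α : ℝ} (hα : 0 < α) {P Q : I → ℝ≥0∞} (hP : ∀ i, P i ≠ ⊤)
    (hQ : ∀ i, Q i ≠ ⊤) {A : I → O → ℝ≥0∞} (hA : ∀ i, ∑ o, A i o = 1) :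
    renyiDiv α (fun o => ∑ i, P i * A i o) (fun o => ∑ i, Q i * A i o) ≤ renyiDiv α P Q := by
  rcases lt_trichotomy α 1 with hα₁ | rfl | hα₁
  · rw [renyiDiv_of_ne_one hα₁.ne, renyiDiv_of_ne_one hα₁.ne, mul_comm,
      mul_comm (((α - 1)⁻¹ : ℝ) : EReal)]
    exact EReal.mul_le_mul_of_nonpos_right
      (ENNReal.log_monotone (hellingerSum_le_channel_of_lt_one hα hα₁ hP hQ hA))
      (EReal.coe_nonpos.2 (inv_nonpos.2 (sub_nonpos.2 hα₁.le)))
  · simpa only [renyiDiv, if_true] using klDiv_channel_le P Q hP hQ A hA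
  · rw [renyiDiv_of_ne_one hα₁.ne', renyiDiv_of_ne_one hα₁.ne']
    exact mul_le_mul_of_nonneg_left
      (ENNReal.log_monotone (hellingerSum_channel_le_of_one_lt hα₁ hP hQ hA))
      (EReal.coe_nonneg.2 (inv_nonneg.2 (sub_nonneg.2 hα₁.le)))

end Channel

section IdProdChannel

variable {X Y Z : Type*} [Fintype X] [DecidableEq X]

def idProdChannel (W : Y → Z → ℝ≥0∞) (i : X × Y) (o : X × Z) : ℝ≥0∞ :=
  if i.1 = o.1 then W i.2 o.2 else 0

lemma sum_idProdChannel [Fintype Z] {W : Y → Z → ℝ≥0∞} (hW : ∀ y, ∑ z, W y z = 1) (i : X × Y) :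
    ∑ o, idProdChannel W i o = 1 := by
  simp [idProdChannel, Fintype.sum_prod_type, hW]

lemma sum_mul_idProdChannel [Fintype Y] (f : X × Y → ℝ≥0∞) (W : Y → Z → ℝ≥0∞) (o : X × Z) :
    ∑ i, f i * idProdChannel W i o = ∑ y, f (o.1, y) * W y o.2 := by
  simp [idProdChannel, Fintype.sum_prod_type, mul_ite]

end IdProdChannel

/-- data-processing inequality for `J_α`: if `X — Y — Z` is a Markov chain,
i.e. `P_{XYZ}(x,y,z) = P_{XY}(x,y) W(z|y)` for a channel `W = P_{Z|Y}`, then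
`J_α(X;Z) ≤ J_α(X;Y)`. -/
theorem stmt4 {X Y Z : Type*} [Fintype X] [Fintype Y] [Fintype Z]
    (P : X × Y → ℝ≥0∞) (hP : ∑ p, P p = 1)
    (W : Y → Z → ℝ≥0∞) (hW : ∀ y, ∑ z, W y z = 1) (α : ℝ) (hα : 0 < α) :
    Jalpha α (fun q : X × Z => ∑ y, P (q.1, y) * W y q.2) ≤ Jalpha α P := by
  classical
  refine le_iInf fun ⟨QX, QY⟩ => ?_
  let QZ : PMFon Z := ⟨fun z => ∑ y, QY.1 y * W y z, by rw [sum_sum_mul_channel _ hW, QY.2]⟩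
  refine iInf_le_of_le (QX, QZ) ?_
  have hQ : ∀ i : X × Y, QX.1 i.1 * QY.1 i.2 ≠ ⊤ := fun i =>
    ENNReal.mul_ne_top (ne_top_of_sum_eq_one QX.2 i.1) (ne_top_of_sum_eq_one QY.2 i.2)
  have h := renyiDiv_channel_le hα (ne_top_of_sum_eq_one hP) hQ (sum_idProdChannel hW)
  simp only [sum_mul_idProdChannel] at h
  convert h using 2 with o
  simp [QZ, Finset.mul_sum, mul_assoc]
end

section
/- For all α > 0, J_α(X;Y) ≤ log |X| and J_α(X;Y) ≤ log |Y|, where |X| and |Y| are the cardinalities of the alphabets of X and Y. -/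
open scoped ENNReal BigOperators
open Finset

/-!
If `P ≤ c * Q` pointwise, then `D_α(P ‖ Q) ≤ log c` for every order `α > 0`: for `α > 1` each term
`P^α Q^(1-α)` is at most `c^(α-1) P`, for `α < 1` it is at least `c^(α-1) P` (and `1/(α-1)` flips
the inequality back), and for `α = 1` every log-ratio is at most `log c`. Since
`P(x,y) ≤ P_Y(y) = |X| · (1/|X|) P_Y(y)`, the product of the uniform distribution on `X` with the
marginal `P_Y` is such a `Q` with `c = |X|`; symmetrically for `Y`.
-/

lemma ENNReal.rpow_mul_rpow_one_sub_le_of_le_mul {p q c : ℝ≥0∞} {α : ℝ} (hα : 1 ≤ α)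
    (hq : q ≠ ⊤) (h : p ≤ c * q) : p ^ α * q ^ (1 - α) ≤ c ^ (α - 1) * p := by
  rcases eq_or_ne p 0 with rfl | hp
  · simp [zero_rpow_of_pos (by linarith : (0 : ℝ) < α)]
  have hq0 : q ≠ 0 := by rintro rfl; simp_all
  have hcancel : q ^ (α - 1) * q ^ (1 - α) = 1 := by
    rw [← rpow_add _ _ hq0 hq, sub_add_sub_cancel', sub_self, rpow_zero]
  calc p ^ α * q ^ (1 - α) = p ^ (1 : ℝ) * p ^ (α - 1) * q ^ (1 - α) := by
        rw [← rpow_add_of_nonneg _ _ zero_le_one (by linarith), add_sub_cancel]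
    _ ≤ p ^ (1 : ℝ) * (c ^ (α - 1) * q ^ (α - 1)) * q ^ (1 - α) := by
        rw [← mul_rpow_of_nonneg _ _ (by linarith)]
        gcongr
    _ = c ^ (α - 1) * p := by rw [mul_assoc, mul_assoc, hcancel, rpow_one, mul_one, mul_comm]

lemma ENNReal.rpow_le_rpow_mul_rpow_one_sub_of_le_mul {p q c : ℝ≥0∞} {α : ℝ} (hα₀ : 0 < α)
    (hα₁ : α ≤ 1) (hc : c ≠ ⊤) (h : p ≤ c * q) : c ^ (α - 1) * p ≤ p ^ α * q ^ (1 - α) := by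
  rcases eq_or_ne p 0 with rfl | hp
  · simp
  have hc0 : c ≠ 0 := by rintro rfl; simp_all
  have hcancel : c ^ (α - 1) * c ^ (1 - α) = 1 := by
    rw [← rpow_add _ _ hc0 hc, sub_add_sub_cancel', sub_self, rpow_zero]
  calc c ^ (α - 1) * p = c ^ (α - 1) * (p ^ α * p ^ (1 - α)) := by
        rw [← rpow_add_of_nonneg _ _ hα₀.le (by linarith), add_sub_cancel, rpow_one]
    _ ≤ c ^ (α - 1) * (p ^ α * (c ^ (1 - α) * q ^ (1 - α))) := by
        rw [← mul_rpow_of_nonneg _ _ (by linarith)]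
        gcongr
    _ = p ^ α * q ^ (1 - α) := by
        rw [mul_left_comm, ← mul_assoc (c ^ _), hcancel, one_mul]

section RenyiBound

variable {ι : Type*} [Fintype ι] {P Q : ι → ℝ≥0∞} {c : ℝ≥0∞}

lemma klDiv_le_log_of_le_mul (hP : ∑ i, P i = 1) (hQ : ∀ i, Q i ≠ ⊤) (hc : c ≠ ⊤)
    (h : ∀ i, P i ≤ c * Q i) : klDiv P Q ≤ ((Real.log c.toReal : ℝ) : EReal) := by
  have hac : ∀ i, Q i = 0 → P i = 0 := fun i hi => by simpa [hi] using h i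
  rw [klDiv, if_pos hac, EReal.coe_le_coe_iff]
  have hPtop : ∀ i, P i ≠ ⊤ := fun i =>
    ne_top_of_le_ne_top ENNReal.one_ne_top (hP ▸ single_le_sum (fun _ _ => zero_le) (mem_univ i))
  calc ∑ i, (P i).toReal * Real.log ((P i).toReal / (Q i).toReal)
      ≤ ∑ i, (P i).toReal * Real.log c.toReal := by
        refine sum_le_sum fun i _ => ?_
        rcases eq_or_ne (P i) 0 with hi | hi
        · simp [hi]
        have hPpos : 0 < (P i).toReal := ENNReal.toReal_pos hi (hPtop i)
        have hQpos : 0 < (Q i).toReal := ENNReal.toReal_pos (fun h0 => hi (hac i h0)) (hQ i)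
        gcongr
        rw [div_le_iff₀ hQpos, ← ENNReal.toReal_mul]
        exact ENNReal.toReal_mono (ENNReal.mul_ne_top hc (hQ i)) (h i)
    _ = Real.log c.toReal := by
        rw [← sum_mul, ← ENNReal.toReal_sum (fun i _ => hPtop i), hP, ENNReal.toReal_one, one_mul]

lemma renyiDiv_le_log_of_le_mul {α : ℝ} (hα : 0 < α) (hP : ∑ i, P i = 1)
    (hQ : ∀ i, Q i ≠ ⊤) (hc : c ≠ ⊤) (h : ∀ i, P i ≤ c * Q i) :
    renyiDiv α P Q ≤ ((Real.log c.toReal : ℝ) : EReal) := by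
  rcases eq_or_ne α 1 with rfl | hα1
  · rw [renyiDiv, if_pos rfl]
    exact klDiv_le_log_of_le_mul hP hQ hc h
  have hc0 : c ≠ 0 := by
    rintro rfl
    simp only [zero_mul, nonpos_iff_eq_zero] at h
    simp [h] at hP
  have hlog : ENNReal.log (c ^ (α - 1)) = (((α - 1) * Real.log c.toReal : ℝ) : EReal) := by
    rw [ENNReal.log_rpow, ENNReal.log_pos_real hc0 hc, EReal.coe_mul]
  have hscale : (((α - 1)⁻¹ : ℝ) : EReal) * ENNReal.log (c ^ (α - 1))
      = ((Real.log c.toReal : ℝ) : EReal) := by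
    rw [hlog, ← EReal.coe_mul, inv_mul_cancel_left₀ (sub_ne_zero.2 hα1)]
  have hsum : ∑ i, c ^ (α - 1) * P i = c ^ (α - 1) := by rw [← mul_sum, hP, mul_one]
  rw [renyiDiv, if_neg hα1, ← hscale]
  rcases hα1.lt_or_gt with hlt | hgt
  · have hS : c ^ (α - 1) ≤ ∑ i, P i ^ α * Q i ^ (1 - α) := hsum ▸ sum_le_sum fun i _ =>
      ENNReal.rpow_le_rpow_mul_rpow_one_sub_of_le_mul hα hlt.le hc (h i)
    rw [mul_comm, mul_comm (((α - 1)⁻¹ : ℝ) : EReal)]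
    exact EReal.mul_le_mul_of_nonpos_right (ENNReal.log_le_log hS)
      (EReal.coe_nonpos.2 (inv_nonpos.2 (by linarith)))
  · have hS : ∑ i, P i ^ α * Q i ^ (1 - α) ≤ c ^ (α - 1) := hsum ▸ sum_le_sum fun i _ =>
      ENNReal.rpow_mul_rpow_one_sub_le_of_le_mul hgt.le (hQ i) (h i)
    exact mul_le_mul_of_nonneg_left (ENNReal.log_le_log hS)
      (EReal.coe_nonneg.2 (inv_nonneg.2 (by linarith)))

end RenyiBound

namespace PMFon

variable {X Y : Type*} [Fintype X] [Fintype Y]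

lemma ne_top (q : PMFon X) (x : X) : q.1 x ≠ ⊤ :=
  ne_top_of_le_ne_top ENNReal.one_ne_top
    ((single_le_sum (fun _ _ => zero_le) (mem_univ x)).trans_eq q.2)

noncomputable def uniform (X : Type*) [Fintype X] [Nonempty X] : PMFon X :=
  ⟨fun _ => (Fintype.card X : ℝ≥0∞)⁻¹, by
    rw [sum_const, card_univ, nsmul_eq_mul,
      ENNReal.mul_inv_cancel (by simp) (ENNReal.natCast_ne_top _)]⟩

noncomputable def fstMarginal {P : X × Y → ℝ≥0∞} (hP : ∑ p, P p = 1) : PMFon X :=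
  ⟨margX P, by rw [← hP, Fintype.sum_prod_type]; rfl⟩

noncomputable def sndMarginal {P : X × Y → ℝ≥0∞} (hP : ∑ p, P p = 1) : PMFon Y :=
  ⟨margY P, by rw [← hP, Fintype.sum_prod_type_right]; rfl⟩

end PMFon

section Jalpha

variable {X Y : Type*} [Fintype X] [Fintype Y] {P : X × Y → ℝ≥0∞}

lemma le_margX (P : X × Y → ℝ≥0∞) (x : X) (y : Y) : P (x, y) ≤ margX P x :=
  single_le_sum (f := fun y => P (x, y)) (fun _ _ => zero_le) (mem_univ y)

lemma le_margY (P : X × Y → ℝ≥0∞) (x : X) (y : Y) : P (x, y) ≤ margY P y :=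
  single_le_sum (f := fun x => P (x, y)) (fun _ _ => zero_le) (mem_univ x)

lemma Jalpha_le_log_of_le_mul {α : ℝ} (hα : 0 < α) (hP : ∑ p, P p = 1) (Q₁ : PMFon X)
    (Q₂ : PMFon Y) {c : ℝ≥0∞} (hc : c ≠ ⊤) (h : ∀ p, P p ≤ c * (Q₁.1 p.1 * Q₂.1 p.2)) :
    Jalpha α P ≤ ((Real.log c.toReal : ℝ) : EReal) :=
  (iInf_le (fun Q : PMFon X × PMFon Y => renyiDiv α P (fun p => Q.1.1 p.1 * Q.2.1 p.2))
    (Q₁, Q₂)).trans <| renyiDiv_le_log_of_le_mul hα hP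
      (fun p => ENNReal.mul_ne_top (Q₁.ne_top p.1) (Q₂.ne_top p.2)) hc h

lemma Jalpha_le_log_card_left [Nonempty X] {α : ℝ} (hα : 0 < α) (hP : ∑ p, P p = 1) :
    Jalpha α P ≤ ((Real.log (Fintype.card X) : ℝ) : EReal) := by
  simpa using Jalpha_le_log_of_le_mul hα hP (PMFon.uniform X) (PMFon.sndMarginal hP)
    (ENNReal.natCast_ne_top _) fun ⟨x, y⟩ => by
      rw [PMFon.uniform, ENNReal.mul_inv_cancel_left (by simp) (ENNReal.natCast_ne_top _)]
      exact le_margY P x y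

lemma Jalpha_le_log_card_right [Nonempty Y] {α : ℝ} (hα : 0 < α) (hP : ∑ p, P p = 1) :
    Jalpha α P ≤ ((Real.log (Fintype.card Y) : ℝ) : EReal) := by
  simpa using Jalpha_le_log_of_le_mul hα hP (PMFon.fstMarginal hP) (PMFon.uniform Y)
    (ENNReal.natCast_ne_top _) fun ⟨x, y⟩ => by
      rw [PMFon.uniform, mul_left_comm,
        ENNReal.mul_inv_cancel (by simp) (ENNReal.natCast_ne_top _), mul_one]
      exact le_margX P x y

end Jalpha

/-- `J_α(X;Y) ≤ log |X|` and `J_α(X;Y) ≤ log |Y|`. -/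
theorem stmt6 {X Y : Type*} [Fintype X] [Fintype Y] (P : X × Y → ℝ≥0∞)
    (hP : ∑ p, P p = 1) (α : ℝ) (hα : 0 < α) :
    Jalpha α P ≤ ((Real.log (Fintype.card X) : ℝ) : EReal) ∧
    Jalpha α P ≤ ((Real.log (Fintype.card Y) : ℝ) : EReal) := by
  obtain ⟨x, y⟩ : Nonempty (X × Y) := by
    by_contra! hempty
    simp at hP
  have : Nonempty X := ⟨x⟩
  have : Nonempty Y := ⟨y⟩
  exact ⟨Jalpha_le_log_card_left hα hP, Jalpha_le_log_card_right hα hP⟩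
end

section
/- For α > 0, α ≠ 1, J_α(X;Y) = min over PMFs Q_X of (α/(α−1)) log Σ_y [ Σ_x P_XY(x,y)^α Q_X(x)^{1−α} ]^{1/α}; i.e., the inner minimization over Q_Y in the definition of J_α can be solved in closed form. -/
open scoped ENNReal BigOperators
open Finset

/-!
Fix `Q_X` and put `S y = ∑ x, P (x, y) ^ α * Q_X x ^ (1 - α)`. Since `Q_X ⊗ Q_Y` factorizes,
`D_α(P ‖ Q_X ⊗ Q_Y) = (α - 1)⁻¹ log ∑ y, S y * Q_Y y ^ (1 - α)`. Hölder's inequality bounds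
`∑ y, S y * Q_Y y ^ (1 - α)` above (for `α < 1`) or below (for `α > 1`) by `(∑ y, S y ^ α⁻¹) ^ α`,
with equality at `Q_Y ∝ S ^ α⁻¹`; the sign of `α - 1` turns both cases into the same lower bound
`α / (α - 1) * log ∑ y, S y ^ α⁻¹` for the divergence, attained at that `Q_Y`.
-/

namespace PMFon

variable {Y : Type*} [Fintype Y]

lemma le_one (Q : PMFon Y) (y : Y) : Q.1 y ≤ 1 :=
  (Finset.single_le_sum (f := Q.1) (fun _ _ => zero_le) (Finset.mem_univ y)).trans_eq Q.2

lemma ne_top_s10 (Q : PMFon Y) (y : Y) : Q.1 y ≠ ⊤ :=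
  ne_top_of_le_ne_top ENNReal.one_ne_top (Q.le_one y)

noncomputable def dirac [DecidableEq Y] (y₀ : Y) : PMFon Y :=
  ⟨fun y => if y = y₀ then 1 else 0, by simp⟩

end PMFon

section Holder

variable {ι : Type*} (s : Finset ι) (S Q : ι → ℝ≥0∞) {α : ℝ}

theorem sum_mul_rpow_one_sub_le_rpow_sum_rpow_inv_of_lt_one (hα : 0 < α) (hα1 : α < 1)
    (hQ : ∑ i ∈ s, Q i = 1) :
    ∑ i ∈ s, S i * Q i ^ (1 - α) ≤ (∑ i ∈ s, S i ^ α⁻¹) ^ α := by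
  have hpq : (α⁻¹).HolderConjugate (1 - α)⁻¹ :=
    ⟨by rw [inv_inv, inv_inv, inv_one]; ring, inv_pos.2 hα, inv_pos.2 (by linarith)⟩
  have hQ' : ∀ i, (Q i ^ (1 - α)) ^ (1 - α)⁻¹ = Q i := fun i => by
    rw [← ENNReal.rpow_mul, mul_inv_cancel₀ (by linarith), ENNReal.rpow_one]
  simpa only [hQ', hQ, one_div, inv_inv, ENNReal.one_rpow, mul_one]
    using ENNReal.inner_le_Lp_mul_Lq s S (fun i => Q i ^ (1 - α)) hpq

theorem rpow_sum_rpow_inv_le_sum_mul_rpow_one_sub_of_one_lt (hα1 : 1 < α)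
    (hQ : ∑ i ∈ s, Q i = 1) :
    (∑ i ∈ s, S i ^ α⁻¹) ^ α ≤ ∑ i ∈ s, S i * Q i ^ (1 - α) := by
  have hα : 0 < α := one_pos.trans hα1
  have hαinv : α⁻¹ < 1 := (inv_lt_one₀ hα).2 hα1
  -- where `Q` vanishes but `S` does not, `0 ^ (1 - α) = ⊤` makes the right side infinite
  by_cases hsupp : ∃ i ∈ s, Q i = 0 ∧ S i ≠ 0
  · obtain ⟨i, hi, hQi, hSi⟩ := hsupp
    refine le_top.trans_eq (ENNReal.sum_eq_top.2 ⟨i, hi, ?_⟩).symm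
    rw [hQi, ENNReal.zero_rpow_of_neg (by linarith), ENNReal.mul_top hSi]
  push Not at hsupp
  have hpq : α.HolderConjugate (1 - α⁻¹)⁻¹ :=
    ⟨by rw [inv_inv, inv_one]; ring, hα, inv_pos.2 (by linarith)⟩
  have hQtop : ∀ i ∈ s, Q i ≠ ⊤ := ENNReal.sum_ne_top.1 (hQ ▸ ENNReal.one_ne_top)
  have hsplit : ∀ i ∈ s, S i ^ α⁻¹ = (S i * Q i ^ (1 - α)) ^ α⁻¹ * Q i ^ (1 - α⁻¹) := by
    intro i hi
    rcases eq_or_ne (Q i) 0 with hQi | hQi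
    · rw [hQi, hsupp i hi hQi, zero_mul, ENNReal.zero_rpow_of_pos (inv_pos.2 hα),
        ENNReal.zero_rpow_of_pos (by linarith), zero_mul]
    · rw [ENNReal.mul_rpow_of_nonneg _ _ (inv_pos.2 hα).le, ← ENNReal.rpow_mul, mul_assoc,
        ← ENNReal.rpow_add _ _ hQi (hQtop i hi),
        show (1 - α) * α⁻¹ + (1 - α⁻¹) = 0 by field_simp; ring, ENNReal.rpow_zero, mul_one]
  have hholder := ENNReal.inner_le_Lp_mul_Lq s (fun i => (S i * Q i ^ (1 - α)) ^ α⁻¹)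
    (fun i => Q i ^ (1 - α⁻¹)) hpq
  have hα0 : α ≠ 0 := hα.ne'
  simp only [← ENNReal.rpow_mul, inv_mul_cancel₀ hα0, mul_inv_cancel₀ (sub_ne_zero.2 hαinv.ne'),
    ENNReal.rpow_one, hQ, ENNReal.one_rpow, mul_one, one_div,
    ← Finset.sum_congr rfl hsplit] at hholder
  calc (∑ i ∈ s, S i ^ α⁻¹) ^ α ≤ ((∑ i ∈ s, S i * Q i ^ (1 - α)) ^ α⁻¹) ^ α :=
        ENNReal.rpow_le_rpow hholder hα.le
    _ = ∑ i ∈ s, S i * Q i ^ (1 - α) := by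
        rw [← ENNReal.rpow_mul, inv_mul_cancel₀ hα0, ENNReal.rpow_one]

end Holder

theorem exists_pmfOn_sum_mul_rpow_one_sub_eq {Y : Type*} [Fintype Y] [Nonempty Y]
    (S : Y → ℝ≥0∞) {α : ℝ} (hα : 0 < α) :
    ∃ Q : PMFon Y, ∑ y, S y * Q.1 y ^ (1 - α) = (∑ y, S y ^ α⁻¹) ^ α := by
  classical
  set T := ∑ y, S y ^ α⁻¹ with hT
  have hαinv : 0 < α⁻¹ := inv_pos.2 hα
  rcases eq_or_ne T 0 with hT0 | hT0
  · have hS : ∀ y, S y = 0 := fun y => (ENNReal.rpow_eq_zero_iff_of_pos hαinv).1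
      (Finset.sum_eq_zero_iff.1 hT0 y (Finset.mem_univ y))
    refine ⟨PMFon.dirac (Classical.arbitrary Y), ?_⟩
    simp only [hS, zero_mul, Finset.sum_const_zero, hT0, ENNReal.zero_rpow_of_pos hα]
  rcases eq_or_ne T ⊤ with hTtop | hTtop
  · obtain ⟨y₀, -, hy₀⟩ := ENNReal.sum_eq_top.1 hTtop
    refine ⟨PMFon.dirac y₀, ?_⟩
    rw [hTtop, ENNReal.top_rpow_of_pos hα]
    refine top_unique ?_
    calc ⊤ = S y₀ * (PMFon.dirac y₀).1 y₀ ^ (1 - α) := by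
          simp [PMFon.dirac, (ENNReal.rpow_eq_top_iff_of_pos hαinv).1 hy₀]
      _ ≤ _ := Finset.single_le_sum (f := fun y => S y * (PMFon.dirac y₀).1 y ^ (1 - α))
          (fun _ _ => zero_le) (Finset.mem_univ y₀)
  have hStop : ∀ y, S y ≠ ⊤ := fun y hy => ENNReal.sum_ne_top.1 hTtop y (Finset.mem_univ y)
    ((ENNReal.rpow_eq_top_iff_of_pos hαinv).2 hy)
  refine ⟨⟨fun y => S y ^ α⁻¹ * T⁻¹,
    by rw [← Finset.sum_mul, ENNReal.mul_inv_cancel hT0 hTtop]⟩, ?_⟩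
  have hterm : ∀ y, S y * (S y ^ α⁻¹ * T⁻¹) ^ (1 - α) = S y ^ α⁻¹ * T ^ (α - 1) := by
    intro y
    have hexp : 1 + α⁻¹ * (1 - α) = α⁻¹ := by field_simp; ring
    rw [ENNReal.mul_rpow_of_ne_top (ENNReal.rpow_ne_top_of_nonneg hαinv.le (hStop y))
        (ENNReal.inv_ne_top.2 hT0), ← ENNReal.rpow_mul, ENNReal.inv_rpow, ← ENNReal.rpow_neg,
      neg_sub, ← mul_assoc]
    congr 1
    calc S y * S y ^ (α⁻¹ * (1 - α)) = S y ^ (1 + α⁻¹ * (1 - α)) := by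
          rw [ENNReal.rpow_add_of_add_pos (hStop y) _ _ (by rw [hexp]; exact hαinv),
            ENNReal.rpow_one]
      _ = S y ^ α⁻¹ := by rw [hexp]
  calc ∑ y, S y * (S y ^ α⁻¹ * T⁻¹) ^ (1 - α) = T * T ^ (α - 1) := by
        simp only [hterm, ← Finset.sum_mul, ← hT]
    _ = T ^ α := by
        conv_rhs => rw [show α = 1 + (α - 1) by ring,
          ENNReal.rpow_add_of_add_pos hTtop _ _ (by linarith), ENNReal.rpow_one]

theorem iInf_pmfOn_log_sum_mul_rpow_one_sub {Y : Type*} [Fintype Y] [Nonempty Y]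
    (S : Y → ℝ≥0∞) {α : ℝ} (hα : 0 < α) (hα1 : α ≠ 1) :
    ⨅ Q : PMFon Y, (((α - 1)⁻¹ : ℝ) : EReal) * ENNReal.log (∑ y, S y * Q.1 y ^ (1 - α))
      = ((α / (α - 1) : ℝ) : EReal) * ENNReal.log (∑ y, S y ^ α⁻¹) := by
  set T := ∑ y, S y ^ α⁻¹
  have hvalue : ((α / (α - 1) : ℝ) : EReal) * ENNReal.log T
      = (((α - 1)⁻¹ : ℝ) : EReal) * ENNReal.log (T ^ α) := by
    rw [ENNReal.log_rpow, ← mul_assoc, ← EReal.coe_mul, div_eq_inv_mul]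
  rw [hvalue]
  obtain ⟨Q₀, hQ₀⟩ := exists_pmfOn_sum_mul_rpow_one_sub_eq S hα
  refine le_antisymm (iInf_le_of_le Q₀ (by rw [hQ₀])) (le_iInf fun Q => ?_)
  rcases hα1.lt_or_gt with hlt | hgt
  · rw [mul_comm, mul_comm _ (ENNReal.log _)]
    refine EReal.mul_le_mul_of_nonpos_right (ENNReal.log_le_log ?_) ?_
    · exact sum_mul_rpow_one_sub_le_rpow_sum_rpow_inv_of_lt_one _ S Q.1 hα hlt Q.2
    · exact_mod_cast (inv_neg''.2 (by linarith)).le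
  · refine mul_le_mul_of_nonneg_left (ENNReal.log_le_log ?_) ?_
    · exact rpow_sum_rpow_inv_le_sum_mul_rpow_one_sub_of_one_lt _ S Q.1 hgt Q.2
    · exact_mod_cast (inv_pos.2 (by linarith)).le

theorem renyiDiv_mul_eq_log_sum {X Y : Type*} [Fintype X] [Fintype Y] (P : X × Y → ℝ≥0∞)
    {α : ℝ} (hα1 : α ≠ 1) {QX : X → ℝ≥0∞} {QY : Y → ℝ≥0∞} (hQX : ∀ x, QX x ≠ ⊤)
    (hQY : ∀ y, QY y ≠ ⊤) :
    renyiDiv α P (fun p => QX p.1 * QY p.2)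
      = (((α - 1)⁻¹ : ℝ) : EReal) *
          ENNReal.log (∑ y, (∑ x, P (x, y) ^ α * QX x ^ (1 - α)) * QY y ^ (1 - α)) := by
  simp only [renyiDiv, if_neg hα1, Fintype.sum_prod_type, Finset.sum_mul,
    ENNReal.mul_rpow_of_ne_top (hQX _) (hQY _), mul_assoc]
  rw [Finset.sum_comm]

/-- closed form for the inner minimization over `Q_Y` in `J_α`. -/
theorem stmt10 {X Y : Type*} [Fintype X] [Fintype Y] (P : X × Y → ℝ≥0∞)
    (hP : ∑ p, P p = 1) (α : ℝ) (hα : 0 < α) (hα1 : α ≠ 1) :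
    Jalpha α P =
      ⨅ QX : PMFon X,
        ((α / (α - 1) : ℝ) : EReal) *
          ENNReal.log (∑ y, (∑ x, P (x, y) ^ α * QX.1 x ^ (1 - α)) ^ (α⁻¹)) := by
  obtain ⟨⟨-, y⟩, -, -⟩ := Finset.exists_ne_zero_of_sum_ne_zero (hP ▸ one_ne_zero)
  have : Nonempty Y := ⟨y⟩
  rw [Jalpha, iInf_prod]
  refine iInf_congr fun QX => ?_
  simp only [renyiDiv_mul_eq_log_sum P hα1 QX.ne_top_s10 (PMFon.ne_top_s10 _)]
  exact iInf_pmfOn_log_sum_mul_rpow_one_sub _ hα hα1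
end
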